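/- arXiv:1602.03196 — 2 statements merged into one kernel-verified Lean document; each statement's English description precedes it below -/
import Mathlib

section
/- Let Φ : Ω → W be a C¹ diffeomorphism between open sets in ℝⁿ, ν, C₁,…,C_{n-2} : Ω → ℝ be C¹ functions, and define the brackets {f,g}_{ν;C₁,…,C_{n-2}} := ν · det Jac(C₁,…,C_{n-2},f,g) on Ω, and similarly on W with ν_Φ := (ν∘Φ⁻¹)·(det Jac(Φ) ∘ Φ⁻¹) and Casimirs Cᵢ∘Φ⁻¹. Then for all C¹ functions f,g : Ω → ℝ, ({f,g}_{ν;C₁,…,C_{n-2}}) ∘ Φ⁻¹ = {f∘Φ⁻¹, g∘Φ⁻¹}_{ν_Φ; C₁∘Φ⁻¹,…,C_{n-2}∘Φ⁻¹}, i.e., Φ is a Poisson map. -/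
/-- The Jacobian determinant of a map `F : ℝⁿ → ℝⁿ` at a point `x`. -/
noncomputable def jacDet {n : ℕ} (F : (Fin n → ℝ) → (Fin n → ℝ)) (x : Fin n → ℝ) : ℝ :=
  LinearMap.det ((fderiv ℝ F x : (Fin n → ℝ) →L[ℝ] (Fin n → ℝ)) :
    (Fin n → ℝ) →ₗ[ℝ] (Fin n → ℝ))

/-- The bracket `{f,g}_{ν;C₁,…,C_{n-2}}(x) = ν(x) · det Jac(C₁,…,C_{n-2},f,g)(x)`. -/
noncomputable def nuBracket {n : ℕ} (ν : (Fin n → ℝ) → ℝ)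
    (C : Fin (n - 2) → (Fin n → ℝ) → ℝ) (f g : (Fin n → ℝ) → ℝ)
    (x : Fin n → ℝ) : ℝ :=
  ν x * jacDet (fun z j =>
    if hj : (j : ℕ) < n - 2 then C ⟨j, hj⟩ z
    else if (j : ℕ) = n - 2 then f z else g z) x

/-!
The bracket is `ν` times the Jacobian determinant of the map `(C₁,…,C_{n-2},f,g)`. Pulling
`f`, `g` and the Casimirs back along `Ψ = Φ⁻¹` composes that map with `Ψ`, so by the chain rule
its Jacobian determinant picks up the factor `Jac Ψ = (Jac Φ ∘ Ψ)⁻¹`, which the density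
`ν_Φ = (ν ∘ Ψ) · (Jac Φ ∘ Ψ)` cancels.
-/

open Topology

variable {n : ℕ}

def casimirFrame (C : Fin (n - 2) → (Fin n → ℝ) → ℝ) (f g : (Fin n → ℝ) → ℝ) :
    (Fin n → ℝ) → Fin n → ℝ :=
  fun z j => if hj : (j : ℕ) < n - 2 then C ⟨j, hj⟩ z
    else if (j : ℕ) = n - 2 then f z else g z

theorem nuBracket_eq (ν : (Fin n → ℝ) → ℝ) (C : Fin (n - 2) → (Fin n → ℝ) → ℝ)
    (f g : (Fin n → ℝ) → ℝ) (x : Fin n → ℝ) :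
    nuBracket ν C f g x = ν x * jacDet (casimirFrame C f g) x :=
  rfl

theorem casimirFrame_comp (C : Fin (n - 2) → (Fin n → ℝ) → ℝ) (f g : (Fin n → ℝ) → ℝ)
    (Ψ : (Fin n → ℝ) → (Fin n → ℝ)) :
    casimirFrame (fun i z => C i (Ψ z)) (fun z => f (Ψ z)) (fun z => g (Ψ z)) =
      casimirFrame C f g ∘ Ψ :=
  rfl

theorem differentiableAt_casimirFrame {C : Fin (n - 2) → (Fin n → ℝ) → ℝ}
    {f g : (Fin n → ℝ) → ℝ} {x : Fin n → ℝ} (hC : ∀ i, DifferentiableAt ℝ (C i) x)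
    (hf : DifferentiableAt ℝ f x) (hg : DifferentiableAt ℝ g x) :
    DifferentiableAt ℝ (casimirFrame C f g) x := by
  refine differentiableAt_pi.2 fun j => ?_
  unfold casimirFrame
  split_ifs
  exacts [hC _, hf, hg]

theorem jacDet_comp {F G : (Fin n → ℝ) → (Fin n → ℝ)} {x : Fin n → ℝ}
    (hF : DifferentiableAt ℝ F (G x)) (hG : DifferentiableAt ℝ G x) :
    jacDet (F ∘ G) x = jacDet F (G x) * jacDet G x := by
  rw [jacDet, jacDet, jacDet, fderiv_comp x hF hG]
  exact LinearMap.det_comp _ _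

theorem jacDet_mul_jacDet_of_eventually_rightInverse {Φ Ψ : (Fin n → ℝ) → (Fin n → ℝ)}
    {y : Fin n → ℝ} (hΦ : DifferentiableAt ℝ Φ (Ψ y)) (hΨ : DifferentiableAt ℝ Ψ y)
    (hinv : Φ ∘ Ψ =ᶠ[𝓝 y] id) :
    jacDet Φ (Ψ y) * jacDet Ψ y = 1 := by
  have hid : jacDet (Φ ∘ Ψ) y = 1 := by
    rw [jacDet, Filter.EventuallyEq.fderiv_eq hinv, fderiv_id,
      ContinuousLinearMap.coe_id, LinearMap.det_id]
  rw [← hid, jacDet_comp hΦ hΨ]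

theorem stmt3_general {n : ℕ} (Ω W : Set (Fin n → ℝ)) (hΩ : IsOpen Ω) (hW : IsOpen W)
    (Φ Ψ : (Fin n → ℝ) → (Fin n → ℝ))
    (hmaps' : Set.MapsTo Ψ W Ω)
    (hright : ∀ y ∈ W, Φ (Ψ y) = y)
    (hΦ : ContDiffOn ℝ 1 Φ Ω) (hΨ : ContDiffOn ℝ 1 Ψ W)
    (ν : (Fin n → ℝ) → ℝ)
    (C : Fin (n - 2) → (Fin n → ℝ) → ℝ) (hC : ∀ i, ContDiffOn ℝ 1 (C i) Ω)
    (f g : (Fin n → ℝ) → ℝ)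
    (hf : ContDiffOn ℝ 1 f Ω) (hg : ContDiffOn ℝ 1 g Ω) :
    ∀ y ∈ W,
      nuBracket ν C f g (Ψ y)
        = nuBracket (fun z => ν (Ψ z) * jacDet Φ (Ψ z))
            (fun i z => C i (Ψ z)) (fun z => f (Ψ z)) (fun z => g (Ψ z)) y := by
  intro y hy
  have hΩ_nhds : Ω ∈ 𝓝 (Ψ y) := hΩ.mem_nhds (hmaps' hy)
  have hΨy : DifferentiableAt ℝ Ψ y := (hΨ.contDiffAt (hW.mem_nhds hy)).differentiableAt_one
  have hframe : DifferentiableAt ℝ (casimirFrame C f g) (Ψ y) :=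
    differentiableAt_casimirFrame (fun i => ((hC i).contDiffAt hΩ_nhds).differentiableAt_one)
      (hf.contDiffAt hΩ_nhds).differentiableAt_one (hg.contDiffAt hΩ_nhds).differentiableAt_one
  have hdet : jacDet Φ (Ψ y) * jacDet Ψ y = 1 :=
    jacDet_mul_jacDet_of_eventually_rightInverse (hΦ.contDiffAt hΩ_nhds).differentiableAt_one
      hΨy (Filter.eventually_of_mem (hW.mem_nhds hy) hright)
  rw [nuBracket_eq, nuBracket_eq, casimirFrame_comp C f g Ψ, jacDet_comp hframe hΨy]
  linear_combination (-ν (Ψ y) * jacDet (casimirFrame C f g) (Ψ y)) * hdet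

/-- A C¹ diffeomorphism `Φ : Ω → W` (with inverse `Ψ`) is a Poisson map:
`{f,g}_{ν;C} ∘ Φ⁻¹ = {f∘Φ⁻¹, g∘Φ⁻¹}_{ν_Φ; C∘Φ⁻¹}` on `W`, where
`ν_Φ = (ν∘Φ⁻¹)·(Jac Φ ∘ Φ⁻¹)`. -/
theorem stmt3 {n : ℕ} (Ω W : Set (Fin n → ℝ)) (hΩ : IsOpen Ω) (hW : IsOpen W)
    (Φ Ψ : (Fin n → ℝ) → (Fin n → ℝ))
    (hmaps : Set.MapsTo Φ Ω W) (hmaps' : Set.MapsTo Ψ W Ω)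
    (hleft : ∀ x ∈ Ω, Ψ (Φ x) = x) (hright : ∀ y ∈ W, Φ (Ψ y) = y)
    (hΦ : ContDiffOn ℝ 1 Φ Ω) (hΨ : ContDiffOn ℝ 1 Ψ W)
    (ν : (Fin n → ℝ) → ℝ) (hν : ContDiffOn ℝ 1 ν Ω)
    (C : Fin (n - 2) → (Fin n → ℝ) → ℝ) (hC : ∀ i, ContDiffOn ℝ 1 (C i) Ω)
    (f g : (Fin n → ℝ) → ℝ)
    (hf : ContDiffOn ℝ 1 f Ω) (hg : ContDiffOn ℝ 1 g Ω) :
    ∀ y ∈ W,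
      nuBracket ν C f g (Ψ y)
        = nuBracket (fun z => ν (Ψ z) * jacDet Φ (Ψ z))
            (fun i z => C i (Ψ z)) (fun z => f (Ψ z)) (fun z => g (Ψ z)) y :=
  stmt3_general Ω W hΩ hW Φ Ψ hmaps' hright hΦ hΨ ν C hC f g hf hg
end

section
/- For the Jacobi hyperelliptic system on ℝⁿ (n ≥ 3) with nonzero constants k₁,…,k_{n-2}, each function Cᵢ(x) = ½(kᵢ²x₁² + x_{i+2}²), i = 1,…,n−2, is a first integral: ⟨∇Cᵢ(x), X(x)⟩ = 0 for all x ∈ ℝⁿ. -/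
/-- For the Jacobi hyperelliptic system, each function `Cᵢ(x) = ½(kᵢ²x₁² + x_{i+2}²)`,
`i = 1,…,n−2`, is a first integral: `⟨∇Cᵢ(x), X(x)⟩ = 0` for all `x ∈ ℝⁿ`. -/
theorem stmt7 {n : ℕ} (hn : 3 ≤ n) (k : Fin (n - 2) → ℝ) (hk : ∀ i, k i ≠ 0)
    (X : (Fin n → ℝ) → (Fin n → ℝ))
    (hX : ∀ x, ∀ j : Fin n,
      X x j = (if (j : ℕ) = 0 then (1 : ℝ) else if (j : ℕ) = 1 then -1
          else if hj : (j : ℕ) - 2 < n - 2 then -(k ⟨(j : ℕ) - 2, hj⟩) ^ 2 else 0)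
        * ∏ i ∈ Finset.univ.erase j, x i) :
    ∀ x : Fin n → ℝ, ∀ i : Fin (n - 2),
      fderiv ℝ (fun z : Fin n → ℝ =>
          ((k i) ^ 2 * z ⟨0, by omega⟩ ^ 2
            + z ⟨(i : ℕ) + 2, by have := i.isLt; omega⟩ ^ 2) / 2) x (X x) = 0 := by
  intro x i
  set j0 : Fin n := ⟨0, by omega⟩
  set jm : Fin n := ⟨(i : ℕ) + 2, by have := i.isLt; omega⟩
  have h0 := (ContinuousLinearMap.proj (R := ℝ) (φ := fun _ : Fin n => ℝ) j0).hasFDerivAt (x := x)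
  have hm := (ContinuousLinearMap.proj (R := ℝ) (φ := fun _ : Fin n => ℝ) jm).hasFDerivAt (x := x)
  have H := (((h0.mul h0).const_mul ((k i) ^ 2)).add (hm.mul hm)).mul_const ((2:ℝ)⁻¹)
  have hfun : (fun z : Fin n → ℝ => ((k i) ^ 2 * z j0 ^ 2 + z jm ^ 2) / 2)
      = fun z : Fin n → ℝ => ((k i) ^ 2 * (z j0 * z j0) + z jm * z jm) * (2:ℝ)⁻¹ := by
    funext z; ring
  have H' : HasFDerivAt
      (fun z : Fin n → ℝ => ((k i) ^ 2 * (z j0 * z j0) + z jm * z jm) * (2:ℝ)⁻¹) _ x := H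
  rw [hfun, H'.fderiv]
  simp only [ContinuousLinearMap.smul_apply, ContinuousLinearMap.add_apply,
    ContinuousLinearMap.proj_apply, smul_eq_mul]
  have e0 : X x j0 = ∏ t ∈ Finset.univ.erase j0, x t := by
    rw [hX]; simp [j0]
  have em : X x jm = -(k i) ^ 2 * ∏ t ∈ Finset.univ.erase jm, x t := by
    rw [hX]
    have h1 : ((jm : ℕ)) = (i : ℕ) + 2 := rfl
    rw [h1]
    have h2 : (i : ℕ) + 2 - 2 < n - 2 := by simpa using i.isLt
    simp only [Nat.add_eq_zero, OfNat.ofNat_ne_zero, and_false, if_false]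
    rw [if_neg (by omega), dif_pos h2]
    have h3 : (⟨(i : ℕ) + 2 - 2, h2⟩ : Fin (n - 2)) = i := Fin.ext (by simp)
    rw [h3]
  rw [e0, em]
  have p0 : x j0 * ∏ t ∈ Finset.univ.erase j0, x t = ∏ t, x t :=
    Finset.mul_prod_erase _ _ (Finset.mem_univ j0)
  have pm : x jm * ∏ t ∈ Finset.univ.erase jm, x t = ∏ t, x t :=
    Finset.mul_prod_erase _ _ (Finset.mem_univ jm)
  field_simp
  nlinarith [p0, pm]
end
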